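/- Let p : Γ̃ → Γ be a universal cover of a finite connected simple graph Γ, with a fixed linear order on V(Γ̃). Let T′ be a finite induced subgraph of Γ̃, let T be an induced subgraph of T′, and let F′ ⊆ F ⊆ V(T). If φ(Γ,T) is F-surviving, then φ(Γ,T′) is F′-surviving. -/

import Mathlib

/-! Right-angled Artin groups in the "opposite" convention:
generators are vertices, and two generators commute iff the vertices are NOT adjacent. -/

/-- The commutation relators for the right-angled Artin group (opposite convention):
one commutator for each pair of distinct non-adjacent vertices. -/
def raagRels {V : Type*} (Γ : SimpleGraph V) : Set (FreeGroup V) :=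
  {r | ∃ u v : V, u ≠ v ∧ ¬ Γ.Adj u v ∧
    r = FreeGroup.of u * FreeGroup.of v * (FreeGroup.of u)⁻¹ * (FreeGroup.of v)⁻¹}

/-- The right-angled Artin group `G(Γ)` (opposite convention). -/
abbrev Raag {V : Type*} (Γ : SimpleGraph V) : Type _ := PresentedGroup (raagRels Γ)

/-- The vertex generators of `G(Γ)`. -/
abbrev Raag.of {V : Type*} (Γ : SimpleGraph V) (v : V) : Raag Γ := PresentedGroup.of v

/-- The element of `G(Γ)` represented by a word: a list of letters, where the letter `(v, b)`
stands for `v` if `b = true` and for `v⁻¹` if `b = false`. -/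
def wordProd {V : Type*} (Γ : SimpleGraph V) (w : List (V × Bool)) : Raag Γ :=
  (w.map fun l => if l.2 then Raag.of Γ l.1 else (Raag.of Γ l.1)⁻¹).prod

/-- A word is reduced if no shorter word represents the same element of `G(Γ)`. -/
def IsReducedWord {V : Type*} (Γ : SimpleGraph V) (w : List (V × Bool)) : Prop :=
  ∀ w' : List (V × Bool), wordProd Γ w' = wordProd Γ w → w.length ≤ w'.length

/-- The word length of `g` with respect to a generating set `S` of a group:
the least length of a list of elements of `S ∪ S⁻¹` whose product is `g`. -/
noncomputable def wordLength {G : Type*} [Group G] (S : Set G) (g : G) : ℕ :=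
  sInf {n | ∃ l : List G, (∀ x ∈ l, x ∈ S ∨ x⁻¹ ∈ S) ∧ l.prod = g ∧ l.length = n}

/-- The (right-invariant) word metric associated to a generating set. -/
noncomputable def wordDist {G : Type*} [Group G] (S : Set G) (x y : G) : ℝ :=
  (wordLength S (y * x⁻¹) : ℝ)

/-- Word length in `G(Γ)` with respect to the vertex generating set. -/
noncomputable def raagNorm {V : Type*} (Γ : SimpleGraph V) (g : Raag Γ) : ℕ :=
  wordLength (Set.range (Raag.of Γ)) g

/-- The word metric on `G(Γ)` with respect to the vertex generating set. -/
noncomputable def raagDist {V : Type*} (Γ : SimpleGraph V) (x y : Raag Γ) : ℝ :=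
  wordDist (Set.range (Raag.of Γ)) x y

/-- A quasi-isometric group embedding: an injective group homomorphism which
is a quasi-isometric embedding with respect to the given metrics. -/
def IsQIEmbedding {G H : Type*} [Group G] [Group H] (f : G →* H)
    (dG : G → G → ℝ) (dH : H → H → ℝ) : Prop :=
  Function.Injective f ∧ ∃ C : ℝ, 1 ≤ C ∧ ∀ x y : G,
    dG x y / C - C ≤ dH (f x) (f y) ∧ dH (f x) (f y) ≤ C * dG x y + C

/-- The support of `g ∈ G(Γ)`: vertices occurring in some reduced word representing `g`. -/
def raagSupp {V : Type*} (Γ : SimpleGraph V) (g : Raag Γ) : Set V :=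
  {v | ∃ w : List (V × Bool), IsReducedWord Γ w ∧ wordProd Γ w = g ∧ ∃ b, (v, b) ∈ w}

/-- A cancellation of the vertex `v` in the word `w`: a subword `v^{±1} w' v^{∓1}` where the
support of the element represented by `w'` is disjoint from the link of `v`. -/
def HasCancellationOf {V : Type*} (Γ : SimpleGraph V) (w : List (V × Bool)) (v : V) : Prop :=
  ∃ (w₁ w' w₂ : List (V × Bool)) (b : Bool),
    w = w₁ ++ (v, b) :: (w' ++ (v, !b) :: w₂) ∧
    ∀ u ∈ raagSupp Γ (wordProd Γ w'), ¬ Γ.Adj v u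

/-- An innermost cancellation of the vertex `v` in the word `w`: a cancellation
`v^{±1} w' v^{∓1}` in which moreover no letter of `w'` involves `v`. -/
def HasInnermostCancellationOf {V : Type*} (Γ : SimpleGraph V) (w : List (V × Bool)) (v : V) :
    Prop :=
  ∃ (w₁ w' w₂ : List (V × Bool)) (b : Bool),
    w = w₁ ++ (v, b) :: (w' ++ (v, !b) :: w₂) ∧
    (∀ u ∈ raagSupp Γ (wordProd Γ w'), ¬ Γ.Adj v u) ∧
    ∀ b' : Bool, (v, b') ∉ w'

/-- A covering of simple graphs: a graph homomorphism which is bijective on neighbor sets. -/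
structure IsGraphCovering {V' V : Type*} (Γ' : SimpleGraph V') (Γ : SimpleGraph V)
    (p : V' → V) : Prop where
  adj : ∀ {x y : V'}, Γ'.Adj x y → Γ.Adj (p x) (p y)
  bijOn : ∀ x : V', Set.BijOn p (Γ'.neighborSet x) (Γ.neighborSet (p x))

/-- A universal cover of a connected graph `Γ`: a covering whose total graph is a tree. -/
def IsUniversalCover {V' V : Type*} (Γ' : SimpleGraph V') (Γ : SimpleGraph V)
    (p : V' → V) : Prop :=
  IsGraphCovering Γ' Γ p ∧ Γ'.IsTree

section Phi

variable {V' V : Type*} [LinearOrder V'] [DecidableEq V]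

/-- The lifts in `T` of a vertex `v`, listed in increasing order. -/
def liftVerts (p : V' → V) (T : Finset V') (v : V) : List V' :=
  (T.filter fun t => p t = v).sort (· ≤ ·)

/-- The lifts in `T` of a vertex `v`, in increasing order, as vertices of the induced subgraph. -/
def liftSubVerts (p : V' → V) (T : Finset V') (v : V) : List (↥(T : Set V')) :=
  (liftVerts p T v).pmap (fun t ht => (⟨t, ht⟩ : ↥(T : Set V')))
    (fun t ht => by
      have : t ∈ T := (Finset.mem_filter.mp ((Finset.mem_sort _).mp ht)).1
      exact Finset.mem_coe.mpr this)

/-- `φ(Γ,T)` sends each vertex `v` of `Γ` to the product, in increasing order,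
of the lifts of `v` lying in `T`.  This predicate singles out the homomorphism `φ(Γ,T)`. -/
def IsPhi (Γ : SimpleGraph V) (Γ' : SimpleGraph V') (p : V' → V) (T : Finset V')
    (φ : Raag Γ →* Raag (Γ'.induce (T : Set V'))) : Prop :=
  ∀ v : V, φ (Raag.of Γ v) =
    ((liftSubVerts p T v).map (Raag.of (Γ'.induce (T : Set V')))).prod

/-- The `φ(Γ,T)`-homomorphic word of a word `w`: each letter `x^{e}` of `w` is replaced by the
word `(t₁ t₂ ⋯ t_k)^{e}` where `t₁ < t₂ < ⋯ < t_k` are the lifts of `x` lying in `T`. -/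
def homWord (p : V' → V) (T : Finset V') (w : List (V × Bool)) :
    List (↥(T : Set V') × Bool) :=
  w.flatMap fun l =>
    if l.2 then (liftSubVerts p T l.1).map (fun t => (t, true))
    else ((liftSubVerts p T l.1).reverse).map (fun t => (t, false))

/-- `φ(Γ,T)` is `F`-surviving: for every reduced word `w` in `G(Γ)` and every `v ∈ F`, the
`φ(Γ,T)`-homomorphic word of `w` has no cancellation of `v`. -/
def IsSurviving (Γ : SimpleGraph V) (Γ' : SimpleGraph V') (p : V' → V) (T : Finset V')
    (F : Set V') : Prop :=
  ∀ w : List (V × Bool), IsReducedWord Γ w →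
    ∀ (v : V') (hv : v ∈ (T : Set V')), v ∈ F →
      ¬ HasCancellationOf (Γ'.induce (T : Set V')) (homWord p T w) ⟨v, hv⟩

end Phi

/-! Deleting the letters outside `T` turns the `φ(Γ,T')`-homomorphic word of `w` into its
`φ(Γ,T)`-homomorphic word, and a cancellation `v^{±1} w' v^{∓1}` with `v ∈ T` into a cancellation
of `v` in the shorter word. At the level of groups the deletion is the retraction
`G(T') → G(T)` killing the generators outside `T`, and it cannot enlarge supports: the letters of
a reduced word occur in every word representing the same element. -/

namespace Raag

variable {V : Type*} {G : SimpleGraph V}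

theorem of_mul_of_comm {u v : V} (h : ¬ G.Adj u v) :
    of G u * of G v = of G v * of G u := by
  by_cases huv : u = v
  · rw [huv]
  · have h1 := PresentedGroup.one_of_mem (rels := raagRels G) ⟨u, v, huv, h, rfl⟩
    simp only [map_mul, map_inv] at h1
    rwa [mul_inv_eq_one, mul_inv_eq_iff_eq_mul] at h1

noncomputable def lift {H : Type*} [Group H] (f : V → H)
    (hf : ∀ u v, ¬ G.Adj u v → Commute (f u) (f v)) : Raag G →* H :=
  PresentedGroup.toGroup (f := f) <| by
    rintro r ⟨u, v, -, huv, rfl⟩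
    simp only [map_mul, map_inv, FreeGroup.lift_apply_of]
    rw [(hf u v huv).eq]
    group

@[simp]
theorem lift_of {H : Type*} [Group H] (f : V → H)
    (hf : ∀ u v, ¬ G.Adj u v → Commute (f u) (f v)) (x : V) : lift f hf (of G x) = f x :=
  PresentedGroup.toGroup.of _

variable (G)

open Classical in
noncomputable def retract (A B : Set V) : Raag (G.induce B) →* Raag (G.induce A) :=
  lift (fun t => if h : (t : V) ∈ A then of _ ⟨t, h⟩ else 1) fun u v huv => by
    by_cases hu : (u : V) ∈ A <;> by_cases hv : (v : V) ∈ A <;> simp only [hu, hv, dite_true,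
      dite_false, Commute.one_left, Commute.one_right]
    exact of_mul_of_comm huv

noncomputable def inclusion {A B : Set V} (hAB : A ⊆ B) :
    Raag (G.induce A) →* Raag (G.induce B) :=
  lift (fun t => of _ (Set.inclusion hAB t)) fun _ _ huv => of_mul_of_comm huv

open Classical in
@[simp]
theorem retract_of (A B : Set V) (t : B) :
    retract G A B (of _ t) = if h : (t : V) ∈ A then of _ ⟨t, h⟩ else 1 :=
  lift_of ..

@[simp]
theorem inclusion_of {A B : Set V} (hAB : A ⊆ B) (t : A) :
    inclusion G hAB (of _ t) = of _ (Set.inclusion hAB t) :=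
  lift_of ..

end Raag

section Words

variable {V : Type*} (G : SimpleGraph V)

@[simp]
theorem wordProd_nil : wordProd G [] = 1 := rfl

theorem wordProd_cons (l : V × Bool) (w : List (V × Bool)) :
    wordProd G (l :: w) = (if l.2 then Raag.of G l.1 else (Raag.of G l.1)⁻¹) * wordProd G w := by
  simp [wordProd]

theorem wordProd_append (w₁ w₂ : List (V × Bool)) :
    wordProd G (w₁ ++ w₂) = wordProd G w₁ * wordProd G w₂ := by
  simp [wordProd]

theorem exists_wordProd_eq (g : Raag G) : ∃ w, wordProd G w = g := by
  obtain ⟨x, rfl⟩ := PresentedGroup.mk_surjective (raagRels G) g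
  induction x using FreeGroup.induction_on with
  | C1 => exact ⟨[], rfl⟩
  | of y => exact ⟨[(y, true)], by simp [wordProd]; rfl⟩
  | inv_of y _ => exact ⟨[(y, false)], by simp [wordProd]; rfl⟩
  | mul a b ha hb =>
    obtain ⟨w₁, h₁⟩ := ha
    obtain ⟨w₂, h₂⟩ := hb
    exact ⟨w₁ ++ w₂, by rw [wordProd_append, h₁, h₂, map_mul]⟩

theorem exists_isReducedWord_wordProd_eq (g : Raag G) :
    ∃ w, IsReducedWord G w ∧ wordProd G w = g := by
  have hne : {n | ∃ w, wordProd G w = g ∧ w.length = n}.Nonempty := by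
    obtain ⟨w, hw⟩ := exists_wordProd_eq G g
    exact ⟨w.length, w, hw, rfl⟩
  obtain ⟨w, hwg, hwn⟩ := Nat.sInf_mem hne
  exact ⟨w, fun w' hw' => hwn ▸ Nat.sInf_le ⟨w', hw'.trans hwg, rfl⟩, hwg⟩

end Words

section Restriction

variable {V : Type*}

open Classical in
noncomputable def restrictWord (A : Set V) {B : Set V} (w : List (B × Bool)) : List (A × Bool) :=
  w.filterMap fun l => if h : (l.1 : V) ∈ A then some (⟨l.1, h⟩, l.2) else none

def inclusionWord {A B : Set V} (hAB : A ⊆ B) (w : List (A × Bool)) : List (B × Bool) :=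
  w.map (Prod.map (Set.inclusion hAB) id)

variable {G : SimpleGraph V} {A B : Set V}

@[simp]
theorem restrictWord_nil : restrictWord A ([] : List (B × Bool)) = [] := rfl

@[simp]
theorem restrictWord_cons_of_mem (l : B × Bool) (w : List (B × Bool)) (h : (l.1 : V) ∈ A) :
    restrictWord A (l :: w) = (⟨l.1, h⟩, l.2) :: restrictWord A w := by
  simp [restrictWord, h]

@[simp]
theorem restrictWord_cons_of_notMem (l : B × Bool) (w : List (B × Bool)) (h : (l.1 : V) ∉ A) :
    restrictWord A (l :: w) = restrictWord A w := by
  simp [restrictWord, h]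

@[simp]
theorem restrictWord_append (w₁ w₂ : List (B × Bool)) :
    restrictWord A (w₁ ++ w₂) = restrictWord A w₁ ++ restrictWord A w₂ :=
  List.filterMap_append

theorem exists_mem_of_mem_restrictWord {w : List (B × Bool)} {l : A × Bool}
    (hl : l ∈ restrictWord A w) : ∃ l' ∈ w, (l'.1 : V) = l.1 ∧ l'.2 = l.2 := by
  obtain ⟨l', hl', h⟩ := List.mem_filterMap.mp hl
  by_cases hA : (l'.1 : V) ∈ A
  · simp only [hA, dite_true, Option.some.injEq] at h
    subst h
    exact ⟨l', hl', rfl, rfl⟩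
  · simp [hA] at h

theorem length_restrictWord_eq_iff {w : List (B × Bool)} :
    (restrictWord A w).length = w.length ↔ ∀ l ∈ w, (l.1 : V) ∈ A := by
  simp only [restrictWord, List.length_filterMap_eq_countP, List.countP_eq_length]
  refine forall₂_congr fun l _ => ?_
  by_cases h : (l.1 : V) ∈ A <;> simp [h]

theorem inclusionWord_restrictWord (hAB : A ⊆ B) {w : List (B × Bool)}
    (hw : ∀ l ∈ w, (l.1 : V) ∈ A) : inclusionWord hAB (restrictWord A w) = w := by
  induction w with
  | nil => rfl
  | cons l w ih =>
    rw [restrictWord_cons_of_mem l w (hw l List.mem_cons_self)]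
    exact congrArg _ (ih fun l' hl' => hw l' (List.mem_cons_of_mem _ hl'))

theorem wordProd_restrictWord (A : Set V) (w : List (B × Bool)) :
    wordProd (G.induce A) (restrictWord A w) = Raag.retract G A B (wordProd (G.induce B) w) := by
  induction w with
  | nil => simp
  | cons l w ih =>
    by_cases h : (l.1 : V) ∈ A
    · rw [restrictWord_cons_of_mem l w h, wordProd_cons, wordProd_cons, ih, map_mul]
      cases l.2 <;> simp [h]
    · rw [restrictWord_cons_of_notMem l w h, wordProd_cons, ih, map_mul]
      cases l.2 <;> simp [h]

theorem wordProd_inclusionWord (hAB : A ⊆ B) (w : List (A × Bool)) :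
    wordProd (G.induce B) (inclusionWord hAB w) =
      Raag.inclusion G hAB (wordProd (G.induce A) w) := by
  induction w with
  | nil => simp [inclusionWord]
  | cons l w ih =>
    rw [inclusionWord, List.map_cons, wordProd_cons, ← inclusionWord, ih, wordProd_cons, map_mul]
    obtain ⟨t, _ | _⟩ := l <;> simp

open Classical in
theorem map_val_restrictWord (w : List (B × Bool)) :
    (restrictWord A w).map (Prod.map Subtype.val id) =
      (w.map (Prod.map Subtype.val id)).filter (·.1 ∈ A) := by
  induction w with
  | nil => rfl
  | cons l w ih => by_cases h : (l.1 : V) ∈ A <;> simp [h, ih]; rfl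

/-- Retracting onto the vertices `A` of `w` and including back fixes the element of `w`, hence
that of `w₀`; by minimality of `w₀` the retraction deleted none of its letters. -/
theorem IsReducedWord.exists_mem_of_wordProd_eq {w₀ w : List (B × Bool)}
    (hred : IsReducedWord (G.induce B) w₀)
    (heq : wordProd (G.induce B) w₀ = wordProd (G.induce B) w) {x : B} {b : Bool}
    (hx : (x, b) ∈ w₀) : ∃ b', (x, b') ∈ w := by
  set A : Set V := {v | ∃ l ∈ w, (l.1 : V) = v}
  have hAB : A ⊆ B := by
    rintro _ ⟨l, -, rfl⟩
    exact l.1.2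
  have hw : ∀ l ∈ w, (l.1 : V) ∈ A := fun l hl => ⟨l, hl, rfl⟩
  have hfix : Raag.inclusion G hAB (Raag.retract G A B (wordProd (G.induce B) w₀)) =
      wordProd (G.induce B) w₀ := by
    rw [heq, ← wordProd_restrictWord, ← wordProd_inclusionWord, inclusionWord_restrictWord hAB hw]
  have hlen : (restrictWord A w₀).length = w₀.length := by
    refine le_antisymm (List.length_filterMap_le _ _) ?_
    simpa [inclusionWord] using
      hred (inclusionWord hAB (restrictWord A w₀))
        (by rw [wordProd_inclusionWord, wordProd_restrictWord, hfix])
  obtain ⟨⟨y, b'⟩, hl, hyx⟩ := length_restrictWord_eq_iff.mp hlen _ hx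
  obtain rfl : y = x := Subtype.ext hyx
  exact ⟨b', hl⟩

theorem exists_mem_raagSupp_of_mem_raagSupp_retract (A : Set V) (g : Raag (G.induce B)) {u : A}
    (hu : u ∈ raagSupp (G.induce A) (Raag.retract G A B g)) :
    ∃ u' ∈ raagSupp (G.induce B) g, (u' : V) = u := by
  obtain ⟨w₀, hred, hw₀, b, hub⟩ := hu
  obtain ⟨w, hw, rfl⟩ := exists_isReducedWord_wordProd_eq _ g
  obtain ⟨b', hub'⟩ :=
    hred.exists_mem_of_wordProd_eq (hw₀.trans (wordProd_restrictWord A w).symm) hub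
  obtain ⟨l, hl, hlu, -⟩ := exists_mem_of_mem_restrictWord hub'
  exact ⟨l.1, ⟨w, hw, rfl, l.2, hl⟩, hlu⟩

theorem HasCancellationOf.restrict {w : List (B × Bool)} {v : V} (hvB : v ∈ B) (hvA : v ∈ A)
    (h : HasCancellationOf (G.induce B) w ⟨v, hvB⟩) :
    HasCancellationOf (G.induce A) (restrictWord A w) ⟨v, hvA⟩ := by
  obtain ⟨w₁, w', w₂, b, rfl, hlk⟩ := h
  refine ⟨restrictWord A w₁, restrictWord A w', restrictWord A w₂, b, by simp [hvA], ?_⟩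
  intro u hu hvu
  rw [wordProd_restrictWord] at hu
  obtain ⟨u', hu', hu'u⟩ := exists_mem_raagSupp_of_mem_raagSupp_retract A _ hu
  exact hlk u' hu' (show G.Adj v u' from hu'u ▸ hvu)

end Restriction

section Lifts

variable {V' V : Type*} [LinearOrder V'] [DecidableEq V] (p : V' → V)

theorem liftVerts_of_subset {T T' : Finset V'} (hTT' : T ⊆ T') (v : V) :
    liftVerts p T v = (liftVerts p T' v).filter (· ∈ T) := by
  refine List.Perm.eq_of_pairwise' (Finset.pairwise_sort _ _)
    ((Finset.pairwise_sort _ _).sublist List.filter_sublist) ?_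
  rw [← Multiset.coe_eq_coe, ← Multiset.filter_coe, liftVerts, liftVerts, Finset.sort_eq,
    Finset.sort_eq, ← Finset.filter_val, Finset.filter_filter]
  congr 1
  ext t
  simp only [Finset.mem_filter]
  exact ⟨fun h => ⟨hTT' h.1, h.2, h.1⟩, fun h => ⟨h.2.2, h.2.1⟩⟩

theorem map_val_liftSubVerts (T : Finset V') (v : V) :
    (liftSubVerts p T v).map Subtype.val = liftVerts p T v := by
  rw [liftSubVerts, List.map_pmap, List.pmap_eq_map, List.map_id']

theorem map_val_homWord (T : Finset V') (w : List (V × Bool)) :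
    (homWord p T w).map (Prod.map Subtype.val id) = w.flatMap fun l =>
      (if l.2 then liftVerts p T l.1 else (liftVerts p T l.1).reverse).map (·, l.2) := by
  rw [homWord, List.map_flatMap]
  refine List.flatMap_congr fun ⟨x, b⟩ _ => ?_
  cases b <;> simp [← map_val_liftSubVerts, List.map_reverse]

theorem restrictWord_homWord {T T' : Finset V'} (hTT' : T ⊆ T') (w : List (V × Bool)) :
    restrictWord (T : Set V') (homWord p T' w) = homWord p T w := by
  refine (Subtype.val_injective.prodMap Function.injective_id).list_map ?_
  rw [map_val_restrictWord, map_val_homWord, map_val_homWord, List.filter_flatMap]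
  refine List.flatMap_congr fun ⟨x, b⟩ _ => ?_
  cases b <;>
    simp [liftVerts_of_subset p hTT', List.filter_map, List.filter_reverse, Function.comp_def]

end Lifts

theorem surviving_mono_general {V V' : Type} [DecidableEq V] [LinearOrder V']
    (Γ : SimpleGraph V)
    (Γ' : SimpleGraph V') (p : V' → V)
    (T T' : Finset V') (hTT' : T ⊆ T')
    (F F' : Set V') (hF'F : F' ⊆ F) (hFT : F ⊆ (T : Set V'))
    (hsurv : IsSurviving Γ Γ' p T F) :
    IsSurviving Γ Γ' p T' F' := by
  intro w hw v hvT' hvF' hcancel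
  have hvT : v ∈ (T : Set V') := hFT (hF'F hvF')
  have hcancelT := hcancel.restrict hvT' hvT
  rw [restrictWord_homWord p hTT'] at hcancelT
  exact hsurv w hw v hvT (hF'F hvF') hcancelT

/-- For a universal cover `p : Γ̃ → Γ` of a finite connected graph with ordered
vertex set, finite induced subgraphs `T ≤ T′` of `Γ̃` and subsets `F′ ⊆ F ⊆ V(T)`:
if `φ(Γ,T)` is `F`-surviving, then `φ(Γ,T′)` is `F′`-surviving. -/
theorem surviving_mono {V V' : Type} [Fintype V] [DecidableEq V] [LinearOrder V']
    (Γ : SimpleGraph V) (hΓ : Γ.Connected)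
    (Γ' : SimpleGraph V') (p : V' → V) (hp : IsUniversalCover Γ' Γ p)
    (T T' : Finset V') (hTT' : T ⊆ T')
    (F F' : Set V') (hF'F : F' ⊆ F) (hFT : F ⊆ (T : Set V'))
    (hsurv : IsSurviving Γ Γ' p T F) :
    IsSurviving Γ Γ' p T' F' :=
  surviving_mono_general Γ Γ' p T T' hTT' F F' hF'F hFT hsurv
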